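/- Let C be the 5-dimensional coalgebra with basis {1, x, y, z, t}, where 1 is group-like, t, y, z are primitive, and Δ(x) = 1 ⊗ x + x ⊗ 1 + y ⊗ z. Then there is a unique rack bialgebra structure on C in which − ◁ x and − ◁ t are the zero maps on ker ε, c ◁ 1 = c, 1 ◁ c = ε(c)1, and x ◁ z = t, x ◁ y = t, z ◁ z = z ◁ y = y ◁ z = y ◁ y = t ◁ z = t ◁ y = 0. In particular, this ◁ is self-distributive and a morphism of coalgebras, and C is not cocommutative. -/

import Mathlib

open TensorProduct

set_option maxHeartbeats 1000000

/-- A rack bialgebra over a field `k`: a counital coaugmented coalgebra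
`(C, Δ, ε, 1)` together with a coalgebra morphism `◁ : C ⊗ C → C`
(given here as a bilinear map `lhd`) which is self-distributive and satisfies
`x ◁ 1 = x`, `1 ◁ x = ε(x)·1` and `ε(x ◁ y) = ε(x)ε(y)`. -/
structure RackBialgebra (k C : Type) [Field k] [AddCommGroup C] [Module k C] where
  comul : C →ₗ[k] C ⊗[k] C
  counit : C →ₗ[k] k
  one : C
  lhd : C →ₗ[k] C →ₗ[k] C
  coassoc : (TensorProduct.assoc k C C C).toLinearMap ∘ₗ
      TensorProduct.map comul LinearMap.id ∘ₗ comul =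
    TensorProduct.map LinearMap.id comul ∘ₗ comul
  counit_comul : (TensorProduct.lid k C).toLinearMap ∘ₗ
      TensorProduct.map counit LinearMap.id ∘ₗ comul = LinearMap.id
  comul_counit : (TensorProduct.rid k C).toLinearMap ∘ₗ
      TensorProduct.map LinearMap.id counit ∘ₗ comul = LinearMap.id
  comul_one : comul one = one ⊗ₜ[k] one
  counit_one : counit one = 1
  lhd_one : ∀ a, lhd a one = a
  one_lhd : ∀ a, lhd one a = counit a • one
  counit_lhd : ∀ a b, counit (lhd a b) = counit a * counit b
  lhd_coalgebra_morphism : comul ∘ₗ TensorProduct.lift lhd =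
    TensorProduct.map (TensorProduct.lift lhd) (TensorProduct.lift lhd) ∘ₗ
      (TensorProduct.tensorTensorTensorComm k C C C C).toLinearMap ∘ₗ
      TensorProduct.map comul comul
  self_distrib : TensorProduct.lift lhd ∘ₗ
      TensorProduct.map (TensorProduct.lift lhd) LinearMap.id =
    TensorProduct.lift lhd ∘ₗ
      TensorProduct.map (TensorProduct.lift lhd) (TensorProduct.lift lhd) ∘ₗ
      (TensorProduct.tensorTensorTensorComm k C C C C).toLinearMap ∘ₗ
      TensorProduct.map LinearMap.id comul

/-- Cocommutativity of the underlying coalgebra of a rack bialgebra. -/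
def RackBialgebra.Cocommutative {k C : Type} [Field k] [AddCommGroup C]
    [Module k C] (R : RackBialgebra k C) : Prop :=
  (TensorProduct.comm k C C).toLinearMap ∘ₗ R.comul = R.comul

open TensorProduct

variable (k : Type) [Field k]

/-- The standard basis `1 = e 0, x = e 1, y = e 2, z = e 3, t = e 4` of the
5-dimensional coalgebra `C`. -/
noncomputable def e5 (i : Fin 5) : Fin 5 → k := Pi.basisFun k (Fin 5) i

/-- The coproduct of the 5-dimensional coalgebra: `1` is group-like,
`y, z, t` are primitive, and `Δ(x) = 1 ⊗ x + x ⊗ 1 + y ⊗ z`. -/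
noncomputable def comul5 : (Fin 5 → k) →ₗ[k] (Fin 5 → k) ⊗[k] (Fin 5 → k) :=
  (Pi.basisFun k (Fin 5)).constr k (fun i =>
    match i with
    | 0 => e5 k 0 ⊗ₜ[k] e5 k 0
    | 1 => e5 k 0 ⊗ₜ[k] e5 k 1 + e5 k 1 ⊗ₜ[k] e5 k 0 + e5 k 2 ⊗ₜ[k] e5 k 3
    | 2 => e5 k 0 ⊗ₜ[k] e5 k 2 + e5 k 2 ⊗ₜ[k] e5 k 0
    | 3 => e5 k 0 ⊗ₜ[k] e5 k 3 + e5 k 3 ⊗ₜ[k] e5 k 0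
    | 4 => e5 k 0 ⊗ₜ[k] e5 k 4 + e5 k 4 ⊗ₜ[k] e5 k 0)

/-- The counit of the 5-dimensional coalgebra: the coefficient of `1`. -/
def counit5 : (Fin 5 → k) →ₗ[k] k := LinearMap.proj 0


set_option synthInstance.maxHeartbeats 1000000

/-- The rack operation. -/
noncomputable def lhd5 : (Fin 5 → k) →ₗ[k] (Fin 5 → k) →ₗ[k] (Fin 5 → k) :=
  (Pi.basisFun k (Fin 5)).constr k (fun i =>
    (Pi.basisFun k (Fin 5)).constr k (fun j =>
      if j = 0 then e5 k i
      else if i = 1 ∧ (j = 2 ∨ j = 3) then e5 k 4 else 0))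

lemma lhd5_apply (i j : Fin 5) : lhd5 k (e5 k i) (e5 k j) =
    if j = 0 then e5 k i
    else if i = 1 ∧ (j = 2 ∨ j = 3) then e5 k 4 else 0 := by
  show lhd5 k (Pi.basisFun k (Fin 5) i) (Pi.basisFun k (Fin 5) j) = _
  rw [lhd5, Module.Basis.constr_basis, Module.Basis.constr_basis]

lemma comul5_apply (i : Fin 5) : comul5 k (e5 k i) =
    match i with
    | 0 => e5 k 0 ⊗ₜ[k] e5 k 0
    | 1 => e5 k 0 ⊗ₜ[k] e5 k 1 + e5 k 1 ⊗ₜ[k] e5 k 0 + e5 k 2 ⊗ₜ[k] e5 k 3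
    | 2 => e5 k 0 ⊗ₜ[k] e5 k 2 + e5 k 2 ⊗ₜ[k] e5 k 0
    | 3 => e5 k 0 ⊗ₜ[k] e5 k 3 + e5 k 3 ⊗ₜ[k] e5 k 0
    | 4 => e5 k 0 ⊗ₜ[k] e5 k 4 + e5 k 4 ⊗ₜ[k] e5 k 0 :=
  (Pi.basisFun k (Fin 5)).constr_basis k _ i

lemma counit5_apply (i : Fin 5) : counit5 k (e5 k i) = if i = 0 then 1 else 0 := by
  simp only [counit5, e5, LinearMap.proj_apply, Pi.basisFun_apply,
    Pi.single_apply]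
  by_cases h : i = 0 <;> simp [h, eq_comm]

lemma lhd5_flip_zero : (lhd5 k).flip (e5 k 0) = LinearMap.id := by
  apply (Pi.basisFun k (Fin 5)).ext; intro i
  have hi : Pi.basisFun k (Fin 5) i = e5 k i := rfl
  rw [hi]
  simp [LinearMap.flip_apply, lhd5_apply]

lemma lhd5_flip_one : (lhd5 k).flip (e5 k 1) = 0 := by
  apply (Pi.basisFun k (Fin 5)).ext; intro i
  have hi : Pi.basisFun k (Fin 5) i = e5 k i := rfl
  rw [hi]
  simp [LinearMap.flip_apply, lhd5_apply]

lemma lhd5_flip_four : (lhd5 k).flip (e5 k 4) = 0 := by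
  apply (Pi.basisFun k (Fin 5)).ext; intro i
  have hi : Pi.basisFun k (Fin 5) i = e5 k i := rfl
  rw [hi]
  simp [LinearMap.flip_apply, lhd5_apply]

lemma lhd5_one_lhd : lhd5 k (e5 k 0) = (counit5 k).smulRight (e5 k 0) := by
  apply (Pi.basisFun k (Fin 5)).ext; intro j
  have hj : Pi.basisFun k (Fin 5) j = e5 k j := rfl
  rw [hj]
  fin_cases j <;>
    simp [lhd5_apply, counit5_apply]

lemma rack5 : ∃ R : RackBialgebra k (Fin 5 → k),
    R.comul = comul5 k ∧ R.counit = counit5 k ∧ R.one = e5 k 0 ∧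
      R.lhd = lhd5 k := by
  refine ⟨{ comul := comul5 k, counit := counit5 k, one := e5 k 0, lhd := lhd5 k
            coassoc := ?_, counit_comul := ?_, comul_counit := ?_
            comul_one := ?_, counit_one := ?_, lhd_one := ?_, one_lhd := ?_
            counit_lhd := ?_, lhd_coalgebra_morphism := ?_
            self_distrib := ?_ }, rfl, rfl, rfl, rfl⟩
  · -- coassoc
    apply (Pi.basisFun k (Fin 5)).ext; intro i
    have hi : Pi.basisFun k (Fin 5) i = e5 k i := rfl
    rw [hi]
    fin_cases i <;>
      simp [comul5_apply, tmul_add, add_tmul] <;> abel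
  · -- counit_comul
    apply (Pi.basisFun k (Fin 5)).ext; intro i
    have hi : Pi.basisFun k (Fin 5) i = e5 k i := rfl
    rw [hi]
    fin_cases i <;>
      simp [comul5_apply, counit5_apply]
  · -- comul_counit
    apply (Pi.basisFun k (Fin 5)).ext; intro i
    have hi : Pi.basisFun k (Fin 5) i = e5 k i := rfl
    rw [hi]
    fin_cases i <;>
      simp [comul5_apply, counit5_apply]
  · -- comul_one
    exact comul5_apply k 0
  · -- counit_one
    simpa using counit5_apply k 0
  · -- lhd_one
    intro a
    have := LinearMap.congr_fun (lhd5_flip_zero k) a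
    simpa using this
  · -- one_lhd
    intro a
    have := LinearMap.congr_fun (lhd5_one_lhd k) a
    simpa [mul_comm] using this
  · -- counit_lhd
    intro a b
    have key : (lhd5 k).compr₂ (counit5 k) =
        (LinearMap.mul k k).compl₁₂ (counit5 k) (counit5 k) := by
      apply (Pi.basisFun k (Fin 5)).ext; intro i
      apply (Pi.basisFun k (Fin 5)).ext; intro j
      have hi : Pi.basisFun k (Fin 5) i = e5 k i := rfl
      have hj : Pi.basisFun k (Fin 5) j = e5 k j := rfl
      rw [hi, hj]
      fin_cases i <;> fin_cases j <;>
        simp [LinearMap.compr₂_apply, LinearMap.compl₁₂_apply,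
          lhd5_apply, counit5_apply]
    have := LinearMap.congr_fun (LinearMap.congr_fun key a) b
    simpa [LinearMap.compr₂_apply, LinearMap.compl₁₂_apply] using this
  · -- coalgebra morphism
    apply TensorProduct.ext
    apply (Pi.basisFun k (Fin 5)).ext; intro i
    apply (Pi.basisFun k (Fin 5)).ext; intro j
    have hi : Pi.basisFun k (Fin 5) i = e5 k i := rfl
    have hj : Pi.basisFun k (Fin 5) j = e5 k j := rfl
    rw [hi, hj]
    simp only [LinearMap.compr₂ₛₗ_apply, TensorProduct.mk_apply,
      LinearMap.comp_apply, LinearEquiv.coe_coe, TensorProduct.map_tmul,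
      TensorProduct.lift.tmul, LinearMap.id_coe, id_eq]
    fin_cases i <;> fin_cases j <;>
      simp [comul5_apply, lhd5_apply, tmul_add, add_tmul,
        TensorProduct.tensorTensorTensorComm_tmul]
  · -- self-distributivity
    apply TensorProduct.ext
    apply TensorProduct.ext
    apply (Pi.basisFun k (Fin 5)).ext; intro i
    apply (Pi.basisFun k (Fin 5)).ext; intro j
    apply (Pi.basisFun k (Fin 5)).ext; intro l
    have hi : Pi.basisFun k (Fin 5) i = e5 k i := rfl
    have hj : Pi.basisFun k (Fin 5) j = e5 k j := rfl
    have hl : Pi.basisFun k (Fin 5) l = e5 k l := rfl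
    rw [hi, hj, hl]
    simp only [LinearMap.compr₂ₛₗ_apply, TensorProduct.mk_apply,
      LinearMap.comp_apply, LinearEquiv.coe_coe, TensorProduct.map_tmul,
      TensorProduct.lift.tmul, LinearMap.id_coe, id_eq]
    fin_cases l <;>
      simp only [comul5_apply, tmul_add, map_add,
        TensorProduct.tensorTensorTensorComm_tmul, TensorProduct.map_tmul,
        TensorProduct.lift.tmul] <;>
    fin_cases i <;> fin_cases j <;>
      simp [lhd5_apply]

/-- on the 5-dimensional coalgebra `C` with basis
`{1, x, y, z, t}`, where `1` is group-like, `t, y, z` are primitive and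
`Δ(x) = 1 ⊗ x + x ⊗ 1 + y ⊗ z`, there is a unique rack bialgebra structure
with `− ◁ x = − ◁ t = 0` on `ker ε`, `c ◁ 1 = c`, `1 ◁ c = ε(c)·1`,
`x ◁ z = x ◁ y = t` and all other products of basis elements of `ker ε`
equal to `0`.  Moreover `C` is not cocommutative. -/
theorem five_dimensional_rack_bialgebra :
    (∃! lhd : (Fin 5 → k) →ₗ[k] (Fin 5 → k) →ₗ[k] (Fin 5 → k),
      -- `− ◁ x` and `− ◁ t` vanish on `ker ε`
      (∀ c, counit5 k c = 0 → lhd c (e5 k 1) = 0 ∧ lhd c (e5 k 4) = 0) ∧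
      -- `c ◁ 1 = c` and `1 ◁ c = ε(c)·1`
      (∀ c, lhd c (e5 k 0) = c) ∧
      (∀ c, lhd (e5 k 0) c = counit5 k c • e5 k 0) ∧
      -- the remaining products of basis elements
      lhd (e5 k 1) (e5 k 3) = e5 k 4 ∧ lhd (e5 k 1) (e5 k 2) = e5 k 4 ∧
      lhd (e5 k 3) (e5 k 3) = 0 ∧ lhd (e5 k 3) (e5 k 2) = 0 ∧
      lhd (e5 k 2) (e5 k 3) = 0 ∧ lhd (e5 k 2) (e5 k 2) = 0 ∧
      lhd (e5 k 4) (e5 k 3) = 0 ∧ lhd (e5 k 4) (e5 k 2) = 0 ∧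
      -- and this `◁` makes `C` a rack bialgebra
      (∃ R : RackBialgebra k (Fin 5 → k),
        R.comul = comul5 k ∧ R.counit = counit5 k ∧ R.one = e5 k 0 ∧
          R.lhd = lhd)) ∧
    -- `C` is not cocommutative
    (TensorProduct.comm k (Fin 5 → k) (Fin 5 → k)).toLinearMap ∘ₗ comul5 k ≠
      comul5 k := by
  constructor
  · refine ⟨lhd5 k, ⟨?_, ?_, ?_, ?_, ?_, ?_, ?_, ?_, ?_, ?_, ?_, rack5 k⟩, ?_⟩
    · intro c hc
      constructor
      · show (lhd5 k).flip (e5 k 1) c = 0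
        rw [lhd5_flip_one]; rfl
      · show (lhd5 k).flip (e5 k 4) c = 0
        rw [lhd5_flip_four]; rfl
    · intro c
      show (lhd5 k).flip (e5 k 0) c = c
      rw [lhd5_flip_zero]; rfl
    · intro c
      rw [lhd5_one_lhd]; rfl
    · simp [lhd5_apply]
    · simp [lhd5_apply]
    · simp [lhd5_apply]
    · simp [lhd5_apply]
    · simp [lhd5_apply]
    · simp [lhd5_apply]
    · simp [lhd5_apply]
    · simp [lhd5_apply]
    · -- uniqueness
      rintro g ⟨h1, h2, h3, h4, h5, h6, h7, h8, h9, h10, h11, -⟩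
      apply (Pi.basisFun k (Fin 5)).ext; intro i
      apply (Pi.basisFun k (Fin 5)).ext; intro j
      have hi : Pi.basisFun k (Fin 5) i = e5 k i := rfl
      have hj : Pi.basisFun k (Fin 5) j = e5 k j := rfl
      rw [hi, hj]
      have hker : ∀ i : Fin 5, i ≠ 0 → counit5 k (e5 k i) = 0 := by
        intro i hi0
        rw [counit5_apply]; simp [hi0]
      fin_cases i <;> fin_cases j <;>
        simp_all [lhd5_apply, counit5_apply,
          fun i hi0 => (h1 (e5 k i) (hker i hi0)).1,
          fun i hi0 => (h1 (e5 k i) (hker i hi0)).2]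
  · -- not cocommutative
    intro h
    have h1 := congrArg (fun f => ((TensorProduct.lid k k).toLinearMap ∘ₗ
      TensorProduct.map (LinearMap.proj 2) (LinearMap.proj 3) ∘ₗ f) (e5 k 1)) h
    simp only [LinearMap.comp_apply, comul5_apply, LinearEquiv.coe_coe] at h1
    simp [tmul_add, add_tmul, TensorProduct.comm_tmul, e5, Pi.single_apply] at h1
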